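/- arXiv:2206.13171 — 7 statements merged into one kernel-verified Lean document; each statement's English description precedes it below -/
import Mathlib

section
/- Let r ≥ 1 be an integer and b_1, …, b_r positive integers, and let u = (u_r, …, u_0) be an element of the LS-monoid LS⁺ whose degree u_r + ⋯ + u_0 is at least 2. Then there exist nonzero elements u′, u″ of LS⁺ such that u = u′ + u″, the degree of u′ equals 1, and there is an index j with 0 ≤ j ≤ r such that u′_k = 0 for every k < j and u″_k = 0 for every k > j. -/
/-- The LS-monoid `LS⁺` associated to bonds `b_1, …, b_r`: tuples `(u_r, …, u_0)` of
nonnegative rationals (encoded as functions `ℕ → ℚ` vanishing above `r`) such that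
`b_k·(u_r + ⋯ + u_k) ∈ ℤ` for every `1 ≤ k ≤ r` and `u_r + ⋯ + u_0 ∈ ℤ`. -/
def LSplus (r : ℕ) (b : ℕ → ℕ) : Set (ℕ → ℚ) :=
  {u | (∀ k, 0 ≤ u k) ∧ (∀ k, r < k → u k = 0) ∧
    (∀ k, 1 ≤ k → k ≤ r → ∃ z : ℤ, (b k : ℚ) * ∑ i ∈ Finset.Icc k r, u i = z) ∧
    (∃ z : ℤ, ∑ i ∈ Finset.Icc 0 r, u i = z)}

/-- any element of `LS⁺` of degree at least `2` splits as a sum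
`u = u′ + u″` of nonzero elements of `LS⁺` with `deg u′ = 1`, where for some index
`j` we have `u′_k = 0` for all `k < j` and `u″_k = 0` for all `k > j`. -/
theorem stmt_1 (r : ℕ) (hr : 1 ≤ r) (b : ℕ → ℕ)
    (hb : ∀ k, 1 ≤ k → k ≤ r → 0 < b k)
    (u : ℕ → ℚ) (hu : u ∈ LSplus r b)
    (hdeg : 2 ≤ ∑ i ∈ Finset.Icc 0 r, u i) :
    ∃ u' u'' : ℕ → ℚ, u' ∈ LSplus r b ∧ u'' ∈ LSplus r b ∧
      u' ≠ 0 ∧ u'' ≠ 0 ∧ u = u' + u'' ∧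
      (∑ i ∈ Finset.Icc 0 r, u' i = 1) ∧
      ∃ j ≤ r, (∀ k, k < j → u' k = 0) ∧ (∀ k, j < k → u'' k = 0) := by
  obtain ⟨hpos, hvan, hint, z0, hz0⟩ := hu
  set T : ℕ → ℚ := fun k => ∑ i ∈ Finset.Icc k r, u i with hTdef
  set j : ℕ := Nat.findGreatest (fun k => 1 ≤ T k) r with hjdef
  have h0 : 1 ≤ T 0 := by
    have : (2 : ℚ) ≤ T 0 := hdeg
    linarith
  have hj_le : j ≤ r := Nat.findGreatest_le r
  have hjT : 1 ≤ T j := by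
    rw [hjdef]
    exact Nat.findGreatest_spec (P := fun k => 1 ≤ T k) (Nat.zero_le r) h0
  -- general splitting of sums
  have hsplit : ∀ (f : ℕ → ℚ) (k m : ℕ), k ≤ m → m ≤ r + 1 →
      ∑ i ∈ Finset.Icc k r, f i =
        ∑ i ∈ Finset.Ico k m, f i + ∑ i ∈ Finset.Icc m r, f i := by
    intro f k m hk hm
    rw [← Finset.Ico_add_one_right_eq_Icc k r, ← Finset.Ico_add_one_right_eq_Icc m r,
      ← Finset.sum_Ico_consecutive f hk hm]
  have hTsucc_nonneg : 0 ≤ T (j + 1) :=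
    Finset.sum_nonneg fun i _ => hpos i
  have hgreatest : ∀ m, j < m → m ≤ r → ¬ (1 ≤ T m) := by
    intro m hm hmr
    rw [hjdef] at hm
    exact Nat.findGreatest_is_greatest hm hmr
  have hTsucc_lt : T (j + 1) < 1 := by
    rcases eq_or_lt_of_le hj_le with h | h
    · have he : Finset.Icc (j + 1) r = ∅ := Finset.Icc_eq_empty (by omega)
      simp [hTdef, he]
    · by_contra hc
      push_neg at hc
      exact hgreatest (j + 1) (by omega) (by omega) hc
  have hTj : T j = u j + T (j + 1) := by
    have := hsplit u j (j + 1) (by omega) (by omega)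
    simpa [Nat.Ico_succ_singleton] using this
  set u' : ℕ → ℚ := fun k => if j < k then u k else if k = j then 1 - T (j + 1) else 0
    with hu'def
  set u'' : ℕ → ℚ := fun k => if j < k then 0 else if k = j then T j - 1 else u k
    with hu''def
  have hu'_gt : ∀ k, j < k → u' k = u k := fun k hk => by simp [hu'def, hk]
  have hu'_eq : u' j = 1 - T (j + 1) := by simp [hu'def]
  have hu'_lt : ∀ k, k < j → u' k = 0 := fun k hk => by
    simp [hu'def, hk.ne, not_lt.mpr hk.le]
  have hu''_gt : ∀ k, j < k → u'' k = 0 := fun k hk => by simp [hu''def, hk]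
  have hu''_eq : u'' j = T j - 1 := by simp [hu''def]
  have hu''_lt : ∀ k, k < j → u'' k = u k := fun k hk => by
    simp [hu''def, hk.ne, not_lt.mpr hk.le]
  -- sums of u'
  have hsum'_gt : ∀ k, j < k → ∑ i ∈ Finset.Icc k r, u' i = T k := by
    intro k hk
    refine Finset.sum_congr rfl fun i hi => ?_
    have := Finset.mem_Icc.mp hi
    exact hu'_gt i (by omega)
  have hsum' : ∀ k, k ≤ j → ∑ i ∈ Finset.Icc k r, u' i = 1 := by
    intro k hk
    rw [hsplit u' k (j + 1) (by omega) (by omega)]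
    have h1 : ∑ i ∈ Finset.Ico k (j + 1), u' i = u' j := by
      refine Finset.sum_eq_single_of_mem j (Finset.mem_Ico.mpr ⟨hk, by omega⟩) ?_
      intro i hi hne
      have := Finset.mem_Ico.mp hi
      exact hu'_lt i (by omega)
    have h2 : ∑ i ∈ Finset.Icc (j + 1) r, u' i = T (j + 1) := by
      refine Finset.sum_congr rfl fun i hi => ?_
      have := Finset.mem_Icc.mp hi
      exact hu'_gt i (by omega)
    rw [h1, h2, hu'_eq]
    ring
  -- sums of u''
  have hsum''_gt : ∀ k, j < k → ∑ i ∈ Finset.Icc k r, u'' i = 0 := by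
    intro k hk
    refine Finset.sum_eq_zero fun i hi => ?_
    have := Finset.mem_Icc.mp hi
    exact hu''_gt i (by omega)
  have hsum'' : ∀ k, k ≤ j → ∑ i ∈ Finset.Icc k r, u'' i = T k - 1 := by
    intro k hk
    rw [hsplit u'' k j hk (by omega)]
    have h1 : ∑ i ∈ Finset.Ico k j, u'' i = ∑ i ∈ Finset.Ico k j, u i := by
      refine Finset.sum_congr rfl fun i hi => ?_
      have := Finset.mem_Ico.mp hi
      exact hu''_lt i (by omega)
    have h2 : ∑ i ∈ Finset.Icc j r, u'' i = T j - 1 := by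
      rw [hsplit u'' j (j + 1) (by omega) (by omega), hsum''_gt (j + 1) (by omega)]
      simp [Nat.Ico_succ_singleton, hu''_eq]
    have h3 : T k = ∑ i ∈ Finset.Ico k j, u i + T j :=
      hsplit u k j hk (by omega)
    rw [h1, h2]
    linarith
  refine ⟨u', u'', ⟨?_, ?_, ?_, ?_⟩, ⟨?_, ?_, ?_, ?_⟩, ?_, ?_, ?_, ?_, j, hj_le, ?_, ?_⟩
  · -- nonneg u'
    intro k
    rcases lt_trichotomy j k with h | h | h
    · rw [hu'_gt k h]; exact hpos k
    · rw [← h, hu'_eq]; linarith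
    · rw [hu'_lt k h]
  · -- vanish u'
    intro k hk
    rw [hu'_gt k (by omega)]
    exact hvan k hk
  · -- integrality u'
    intro k hk1 hk2
    by_cases hkj : k ≤ j
    · exact ⟨b k, by rw [hsum' k hkj]; simp⟩
    · rw [hsum'_gt k (by omega)]
      exact hint k hk1 hk2
  · -- degree u' is integer
    exact ⟨1, by rw [hsum' 0 (Nat.zero_le j)]; norm_num⟩
  · -- nonneg u''
    intro k
    rcases lt_trichotomy j k with h | h | h
    · rw [hu''_gt k h]
    · rw [← h, hu''_eq]; linarith
    · rw [hu''_lt k h]; exact hpos k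
  · -- vanish u''
    intro k hk
    exact hu''_gt k (by omega)
  · -- integrality u''
    intro k hk1 hk2
    by_cases hkj : k ≤ j
    · obtain ⟨z, hz⟩ := hint k hk1 hk2
      refine ⟨z - b k, ?_⟩
      rw [hsum'' k hkj]
      push_cast
      have : (b k : ℚ) * T k = z := hz
      ring_nf
      linarith
    · exact ⟨0, by rw [hsum''_gt k (by omega)]; simp⟩
  · -- degree u'' is integer
    refine ⟨z0 - 1, ?_⟩
    rw [hsum'' 0 (Nat.zero_le j)]
    have : T 0 = z0 := hz0
    push_cast
    linarith
  · -- u' ≠ 0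
    intro h
    have h1 := hsum' 0 (Nat.zero_le j)
    rw [h] at h1
    simp at h1
  · -- u'' ≠ 0
    intro h
    have h1 := hsum'' 0 (Nat.zero_le j)
    rw [h] at h1
    have : (2 : ℚ) ≤ T 0 := hdeg
    simp at h1
    linarith
  · -- u = u' + u''
    funext k
    rcases lt_trichotomy j k with h | h | h
    · simp only [Pi.add_apply, hu'_gt k h, hu''_gt k h, add_zero]
    · simp only [Pi.add_apply, ← h, hu'_eq, hu''_eq]
      linarith
    · simp only [Pi.add_apply, hu'_lt k h, hu''_lt k h, zero_add]
  · -- degree u' = 1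
    exact hsum' 0 (Nat.zero_le j)
  · -- u' vanishes below j
    exact hu'_lt
  · -- u'' vanishes above j
    exact hu''_gt
end

section
/- Let r ≥ 1 be an integer and b_1, …, b_r positive integers. Every nonzero indecomposable element u of the LS-monoid LS⁺ has degree exactly 1, i.e. u_r + u_{r−1} + ⋯ + u_0 = 1. -/
/-- An element `u` of `LS⁺` is decomposable if `u = u′ + u″` with `u′, u″ ∈ LS⁺`
nonzero and, for some index `j ≤ r`, `u′_k = 0` for all `k < j` and `u″_k = 0`
for all `k > j`. -/
def Decomposable (r : ℕ) (b : ℕ → ℕ) (u : ℕ → ℚ) : Prop :=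
  ∃ u' u'' : ℕ → ℚ, u' ∈ LSplus r b ∧ u'' ∈ LSplus r b ∧
    u' ≠ 0 ∧ u'' ≠ 0 ∧ u = u' + u'' ∧
    ∃ j ≤ r, (∀ k, k < j → u' k = 0) ∧ (∀ k, j < k → u'' k = 0)

private lemma sum_Icc_bot (f : ℕ → ℚ) {k r : ℕ} (h : k ≤ r) :
    ∑ i ∈ Finset.Icc k r, f i = f k + ∑ i ∈ Finset.Icc (k+1) r, f i := by
  have he : Finset.Icc k r = insert k (Finset.Icc (k+1) r) := by
    ext x; simp only [Finset.mem_Icc, Finset.mem_insert]; omega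
  rw [he, Finset.sum_insert (by simp)]

private lemma sum_Icc_drop (f : ℕ → ℚ) {j k r : ℕ} (hkj : k ≤ j)
    (h0 : ∀ i, i < j → f i = 0) :
    ∑ i ∈ Finset.Icc k r, f i = ∑ i ∈ Finset.Icc j r, f i := by
  refine (Finset.sum_subset (Finset.Icc_subset_Icc hkj le_rfl) ?_).symm
  intro x hx hx'
  simp only [Finset.mem_Icc] at hx hx'
  exact h0 x (by omega)

/-- every nonzero indecomposable element of `LS⁺` has degree exactly 1. -/
theorem stmt_2 (r : ℕ) (hr : 1 ≤ r) (b : ℕ → ℕ)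
    (hb : ∀ k, 1 ≤ k → k ≤ r → 0 < b k)
    (u : ℕ → ℚ) (hu : u ∈ LSplus r b) (hne : u ≠ 0)
    (hind : ¬ Decomposable r b u) :
    ∑ i ∈ Finset.Icc 0 r, u i = 1 := by
  classical
  obtain ⟨hpos, hzr, hdiv, z, hz⟩ := hu
  set S : ℕ → ℚ := fun k => ∑ i ∈ Finset.Icc k r, u i with hSdef
  have hSstep : ∀ k ≤ r, S k = u k + S (k+1) := fun k hk => sum_Icc_bot u hk
  have hSnn : ∀ k, 0 ≤ S k := fun k => Finset.sum_nonneg fun i _ => hpos i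
  have hz1 : 1 ≤ z := by
    by_contra h
    push_neg at h
    have hzle : (z : ℚ) ≤ 0 := by exact_mod_cast (by omega : z ≤ 0)
    have hS0 : S 0 = 0 := le_antisymm (by rw [show S 0 = (z:ℚ) from hz]; exact hzle) (hSnn 0)
    have hall := (Finset.sum_eq_zero_iff_of_nonneg (fun i _ => hpos i)).1 hS0
    apply hne
    funext k
    by_cases hk : k ≤ r
    · exact hall k (by simp [Finset.mem_Icc, hk])
    · exact hzr k (by omega)
  rcases eq_or_lt_of_le hz1 with h1 | h2
  · rw [hz, ← h1]; norm_num
  · exfalso; apply hind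
    have hS01 : (1 : ℚ) ≤ S 0 := by
      rw [show S 0 = (z:ℚ) from hz]; exact_mod_cast hz1
    set j := Nat.findGreatest (fun k => 1 ≤ S k) r with hjdef
    have hjr : j ≤ r := Nat.findGreatest_le r
    have hjP : 1 ≤ S j := Nat.findGreatest_spec (P := fun k => 1 ≤ S k) (Nat.zero_le r) hS01
    have hjgt : S (j+1) < 1 := by
      rcases le_or_gt (j+1) r with h | h
      · have := Nat.findGreatest_is_greatest (lt_add_one j) h
        exact lt_of_not_ge this
      · have he : Finset.Icc (j+1) r = ∅ := by
          rw [Finset.Icc_eq_empty_iff]; omega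
        have : S (j+1) = 0 := by rw [hSdef]; simp [he]
        rw [this]; norm_num
    set u' : ℕ → ℚ := fun k => if k < j then 0 else if k = j then 1 - S (j+1) else u k
      with hu'def
    set u'' : ℕ → ℚ := fun k => if k < j then u k else if k = j then S j - 1 else 0
      with hu''def
    have hu'lo : ∀ i, i < j → u' i = 0 := fun i hi => by
      simp only [hu'def]; rw [if_pos hi]
    have hu'j : u' j = 1 - S (j+1) := by
      simp only [hu'def]; rw [if_neg (lt_irrefl j)]; simp
    have hu'hi : ∀ i, j < i → u' i = u i := fun i hi => by
      simp only [hu'def]; rw [if_neg (by omega : ¬ i < j), if_neg (by omega : i ≠ j)]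
    have hu''hi : ∀ i, j < i → u'' i = 0 := fun i hi => by
      simp only [hu''def]; rw [if_neg (by omega : ¬ i < j), if_neg (by omega : i ≠ j)]
    have hu''lo : ∀ i, i < j → u'' i = u i := fun i hi => by
      simp only [hu''def]; rw [if_pos hi]
    have hu''j : u'' j = S j - 1 := by
      simp only [hu''def]; rw [if_neg (lt_irrefl j)]; simp
    -- partial sums of u'
    have hsum'hi : ∀ k, j < k → ∑ i ∈ Finset.Icc k r, u' i = S k := by
      intro k hk
      refine Finset.sum_congr rfl fun i hi => ?_
      simp only [Finset.mem_Icc] at hi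
      exact hu'hi i (by omega)
    have htail : ∑ i ∈ Finset.Icc (j+1) r, u' i = S (j+1) := hsum'hi (j+1) (lt_add_one j)
    have hsum' : ∀ k, k ≤ j → ∑ i ∈ Finset.Icc k r, u' i = 1 := by
      intro k hk
      rw [sum_Icc_drop u' hk hu'lo, sum_Icc_bot u' hjr, htail, hu'j]
      ring
    -- u'' = u - u'
    have hsub : ∀ i, u'' i = u i - u' i := by
      intro i
      rcases lt_trichotomy i j with h | h | h
      · rw [hu''lo i h, hu'lo i h]; ring
      · have e := hSstep j (by omega)
        rw [h, hu''j, hu'j]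
        linarith
      · rw [hu''hi i h, hu'hi i h]; ring
    have hequ : u = u' + u'' := by
      funext i
      have := hsub i
      simp only [Pi.add_apply]
      linarith
    have hsum'' : ∀ k, ∑ i ∈ Finset.Icc k r, u'' i = S k - ∑ i ∈ Finset.Icc k r, u' i := by
      intro k
      rw [hSdef]
      simp only [← Finset.sum_sub_distrib]
      exact Finset.sum_congr rfl fun i _ => hsub i
    have hsum''hi : ∀ k, j < k → ∑ i ∈ Finset.Icc k r, u'' i = 0 := by
      intro k hk
      rw [hsum'' k, hsum'hi k hk]; ring
    have hsum''lo : ∀ k, k ≤ j → ∑ i ∈ Finset.Icc k r, u'' i = S k - 1 := by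
      intro k hk
      rw [hsum'' k, hsum' k hk]
    -- memberships
    have hmem' : u' ∈ LSplus r b := by
      refine ⟨?_, ?_, ?_, ⟨1, by rw [hsum' 0 (Nat.zero_le j)]; norm_num⟩⟩
      · intro k
        rcases lt_trichotomy k j with h | h | h
        · rw [hu'lo k h]
        · rw [h, hu'j]; linarith
        · rw [hu'hi k h]; exact hpos k
      · intro k hk
        rw [hu'hi k (by omega)]
        exact hzr k hk
      · intro k hk1 hkr
        rcases le_or_gt k j with h | h
        · exact ⟨b k, by rw [hsum' k h]; norm_num⟩
        · obtain ⟨w, hw⟩ := hdiv k hk1 hkr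
          exact ⟨w, by rw [hsum'hi k h]; exact hw⟩
    have hmem'' : u'' ∈ LSplus r b := by
      refine ⟨?_, ?_, ?_, ⟨z - 1, ?_⟩⟩
      · intro k
        rcases lt_trichotomy k j with h | h | h
        · rw [hu''lo k h]; exact hpos k
        · rw [h, hu''j]; linarith
        · rw [hu''hi k h]
      · intro k hk
        exact hu''hi k (by omega)
      · intro k hk1 hkr
        rcases le_or_gt k j with h | h
        · obtain ⟨w, hw⟩ := hdiv k hk1 hkr
          refine ⟨w - b k, ?_⟩
          rw [hsum''lo k h]
          push_cast
          rw [mul_sub, hw]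
          ring
        · exact ⟨0, by rw [hsum''hi k h]; norm_num⟩
      · rw [hsum''lo 0 (Nat.zero_le j), show S 0 = (z:ℚ) from hz]
        push_cast
        ring
    -- nonzero
    have hne' : u' ≠ 0 := by
      intro h
      have := hsum' 0 (Nat.zero_le j)
      rw [h] at this
      simp at this
    have hne'' : u'' ≠ 0 := by
      intro h
      have h0 := hsum''lo 0 (Nat.zero_le j)
      rw [h, show S 0 = (z:ℚ) from hz] at h0
      have : (1:ℚ) < (z:ℚ) := by exact_mod_cast h2
      simp at h0
      linarith
    exact ⟨u', u'', hmem', hmem'', hne', hne'', hequ, j, hjr, hu'lo, hu''hi⟩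
end

section
/- Let r ≥ 1 be an integer and b_1, …, b_r positive integers, and let u, v be elements of the LS-monoid LS⁺, each of degree 1. Then there exist elements u′, v′ of LS⁺, each of degree 1, such that u + v = u′ + v′ and there is an index j with 0 ≤ j ≤ r such that u′_k = 0 for every k < j and v′_k = 0 for every k > j. -/
private lemma icc_split (f : ℕ → ℚ) {m j r : ℕ} (h1 : m ≤ j) (h2 : j ≤ r) :
    ∑ i ∈ Finset.Icc m r, f i =
      (∑ i ∈ Finset.Icc m j, f i) + ∑ i ∈ Finset.Icc (j+1) r, f i := by
  rw [← Finset.sum_union]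
  · congr 1
    ext i
    simp only [Finset.mem_union, Finset.mem_Icc]
    omega
  · rw [Finset.disjoint_left]
    intro i hi hi'
    simp only [Finset.mem_Icc] at hi hi'
    omega

private lemma icc_bot (f : ℕ → ℚ) {m r : ℕ} (h : m ≤ r) :
    ∑ i ∈ Finset.Icc m r, f i = f m + ∑ i ∈ Finset.Icc (m+1) r, f i := by
  rw [icc_split f (le_refl m) h, Finset.Icc_self, Finset.sum_singleton]

/-- if `u, v ∈ LS⁺` have degree one, then `u + v = u′ + v′` with
`u′, v′ ∈ LS⁺` of degree one, where for some index `j ≤ r` one has `u′_k = 0` for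
all `k < j` and `v′_k = 0` for all `k > j`. -/
theorem stmt_4 (r : ℕ) (hr : 1 ≤ r) (b : ℕ → ℕ)
    (hb : ∀ k, 1 ≤ k → k ≤ r → 0 < b k)
    (u v : ℕ → ℚ) (hu : u ∈ LSplus r b) (hv : v ∈ LSplus r b)
    (hdu : ∑ i ∈ Finset.Icc 0 r, u i = 1)
    (hdv : ∑ i ∈ Finset.Icc 0 r, v i = 1) :
    ∃ u' v' : ℕ → ℚ, u' ∈ LSplus r b ∧ v' ∈ LSplus r b ∧
      (∑ i ∈ Finset.Icc 0 r, u' i = 1) ∧ (∑ i ∈ Finset.Icc 0 r, v' i = 1) ∧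
      u + v = u' + v' ∧
      ∃ j ≤ r, (∀ k, k < j → u' k = 0) ∧ (∀ k, j < k → v' k = 0) := by
  obtain ⟨hu0, hur, huk, hu1⟩ := hu
  obtain ⟨hv0, hvr, hvk, hv1⟩ := hv
  set w : ℕ → ℚ := fun k => u k + v k with hwdef
  have hw0 : ∀ k, 0 ≤ w k := fun k => add_nonneg (hu0 k) (hv0 k)
  have hwr : ∀ k, r < k → w k = 0 := fun k hk => by
    simp [hwdef, hur k hk, hvr k hk]
  have hWsplit : ∀ m, ∑ i ∈ Finset.Icc m r, w i =
      (∑ i ∈ Finset.Icc m r, u i) + ∑ i ∈ Finset.Icc m r, v i := fun m => by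
    simp [hwdef, Finset.sum_add_distrib]
  have hex : ∃ k, (∑ i ∈ Finset.Icc (k+1) r, w i) ≤ 1 := by
    refine ⟨r, ?_⟩
    rw [Finset.Icc_eq_empty (by omega)]
    simp
  set j := Nat.find hex with hjdef
  have hPj : (∑ i ∈ Finset.Icc (j+1) r, w i) ≤ 1 := Nat.find_spec hex
  have hjr : j ≤ r := Nat.find_le (by rw [Finset.Icc_eq_empty (by omega)]; simp)
  have hW0 : ∑ i ∈ Finset.Icc 0 r, w i = 2 := by
    rw [hWsplit 0, hdu, hdv]; norm_num
  have hWj : 1 ≤ ∑ i ∈ Finset.Icc j r, w i := by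
    rcases Nat.eq_zero_or_pos j with h0 | h0
    · rw [h0, hW0]; norm_num
    · have hmin := Nat.find_min hex (show j - 1 < j by omega)
      rw [show j - 1 + 1 = j by omega] at hmin
      exact le_of_lt (not_le.mp hmin)
  set S : ℚ := ∑ i ∈ Finset.Icc (j+1) r, w i with hSdef
  set u' : ℕ → ℚ := fun k => if k < j then 0 else if k = j then 1 - S else w k with hu'def
  set v' : ℕ → ℚ := fun k => w k - u' k with hv'def
  have hWjS : ∑ i ∈ Finset.Icc j r, w i = w j + S := icc_bot w hjr
  -- tail sums of u'
  have hA : ∀ m, m ≤ j → ∑ i ∈ Finset.Icc m r, u' i = 1 := by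
    intro m hm
    rw [icc_split u' hm hjr]
    have h1 : ∑ i ∈ Finset.Icc m j, u' i = 1 - S := by
      rw [Finset.sum_eq_single_of_mem j (Finset.mem_Icc.mpr ⟨hm, le_refl j⟩)]
      · simp [hu'def]
      · intro i hi hne
        have : i < j := by
          have := Finset.mem_Icc.mp hi; omega
        simp [hu'def, this]
    have h2 : ∑ i ∈ Finset.Icc (j+1) r, u' i = S := by
      apply Finset.sum_congr rfl
      intro i hi
      have hij : j < i := by have := Finset.mem_Icc.mp hi; omega
      simp only [hu'def]
      rw [if_neg (by omega), if_neg (by omega)]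
    rw [h1, h2]; ring
  have hB : ∀ m, j < m → ∑ i ∈ Finset.Icc m r, u' i = ∑ i ∈ Finset.Icc m r, w i := by
    intro m hm
    apply Finset.sum_congr rfl
    intro i hi
    have hij : j < i := by have := Finset.mem_Icc.mp hi; omega
    simp only [hu'def]
    rw [if_neg (by omega), if_neg (by omega)]
  have hvsum : ∀ m, ∑ i ∈ Finset.Icc m r, v' i =
      (∑ i ∈ Finset.Icc m r, w i) - ∑ i ∈ Finset.Icc m r, u' i := fun m => by
    simp [hv'def, Finset.sum_sub_distrib]
  -- membership of u'
  have hu'mem : u' ∈ LSplus r b := by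
    refine ⟨?_, ?_, ?_, ?_⟩
    · intro k
      simp only [hu'def]
      split_ifs with h1 h2
      · exact le_refl 0
      · linarith
      · exact hw0 k
    · intro k hk
      simp only [hu'def]
      rw [if_neg (by omega), if_neg (by omega)]
      exact hwr k hk
    · intro k hk1 hk2
      rcases le_or_gt k j with hkj | hkj
      · exact ⟨(b k : ℤ), by rw [hA k hkj, mul_one]; push_cast; ring⟩
      · obtain ⟨z1, hz1⟩ := huk k hk1 hk2
        obtain ⟨z2, hz2⟩ := hvk k hk1 hk2
        refine ⟨z1 + z2, ?_⟩
        rw [hB k hkj, hWsplit k, mul_add, hz1, hz2]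
        push_cast; ring
    · exact ⟨1, by rw [hA 0 (Nat.zero_le j)]; norm_num⟩
  -- membership of v'
  have hv'mem : v' ∈ LSplus r b := by
    refine ⟨?_, ?_, ?_, ?_⟩
    · intro k
      simp only [hv'def, hu'def]
      split_ifs with h1 h2
      · simpa using hw0 k
      · subst h2
        rw [hWjS] at hWj
        linarith
      · simp
    · intro k hk
      simp only [hv'def, hu'def]
      rw [if_neg (by omega), if_neg (by omega), hwr k hk]
      ring
    · intro k hk1 hk2
      rcases le_or_gt k j with hkj | hkj
      · obtain ⟨z1, hz1⟩ := huk k hk1 hk2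
        obtain ⟨z2, hz2⟩ := hvk k hk1 hk2
        refine ⟨z1 + z2 - b k, ?_⟩
        rw [hvsum k, hA k hkj, hWsplit k, mul_sub, mul_add, hz1, hz2]
        push_cast; ring
      · exact ⟨0, by rw [hvsum k, hB k hkj]; simp⟩
    · refine ⟨1, ?_⟩
      rw [hvsum 0, hA 0 (Nat.zero_le j), hW0]
      norm_num
  refine ⟨u', v', hu'mem, hv'mem, hA 0 (Nat.zero_le j), ?_, ?_, j, hjr, ?_, ?_⟩
  · rw [hvsum 0, hA 0 (Nat.zero_le j), hW0]; norm_num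
  · funext k
    simp only [Pi.add_apply, hv'def]
    simp [hwdef]
  · intro k hk
    simp [hu'def, hk]
  · intro k hk
    simp only [hv'def, hu'def]
    rw [if_neg (by omega), if_neg (by omega)]
    ring
end

section
/- The set of quadruples (a_0, a_1, a_2, a_3) of positive integers satisfying a_0 ≤ a_1 ≤ a_2 ≤ a_3, gcd(a_1,a_2,a_3) = gcd(a_0,a_2,a_3) = gcd(a_0,a_1,a_3) = gcd(a_0,a_1,a_2) = 1, and a_i divides a_0 + a_1 + a_2 + a_3 for each i = 0,1,2,3, is exactly the following 14-element set: (1,1,1,1), (1,1,1,3), (1,1,2,2), (1,1,2,4), (1,1,4,6), (1,2,2,5), (1,2,3,6), (1,2,6,9), (1,3,4,4), (1,3,8,12), (1,4,5,10), (1,6,14,21), (2,3,3,4), (2,3,10,15). -/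
set_option maxHeartbeats 4000000 in
/-- the normalized, nondecreasing weight quadruples `(a_0,a_1,a_2,a_3)` of
positive integers with `a_i ∣ a_0+a_1+a_2+a_3` for all `i` are exactly the 14 listed ones. -/
theorem stmt_6 :
    {a : ℕ × ℕ × ℕ × ℕ |
      0 < a.1 ∧ 0 < a.2.1 ∧ 0 < a.2.2.1 ∧ 0 < a.2.2.2 ∧
      a.1 ≤ a.2.1 ∧ a.2.1 ≤ a.2.2.1 ∧ a.2.2.1 ≤ a.2.2.2 ∧
      Nat.gcd (Nat.gcd a.2.1 a.2.2.1) a.2.2.2 = 1 ∧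
      Nat.gcd (Nat.gcd a.1 a.2.2.1) a.2.2.2 = 1 ∧
      Nat.gcd (Nat.gcd a.1 a.2.1) a.2.2.2 = 1 ∧
      Nat.gcd (Nat.gcd a.1 a.2.1) a.2.2.1 = 1 ∧
      a.1 ∣ a.1 + a.2.1 + a.2.2.1 + a.2.2.2 ∧
      a.2.1 ∣ a.1 + a.2.1 + a.2.2.1 + a.2.2.2 ∧
      a.2.2.1 ∣ a.1 + a.2.1 + a.2.2.1 + a.2.2.2 ∧
      a.2.2.2 ∣ a.1 + a.2.1 + a.2.2.1 + a.2.2.2} =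
    {(1,1,1,1), (1,1,1,3), (1,1,2,2), (1,1,2,4), (1,1,4,6), (1,2,2,5), (1,2,3,6),
     (1,2,6,9), (1,3,4,4), (1,3,8,12), (1,4,5,10), (1,6,14,21), (2,3,3,4), (2,3,10,15)} := by
  ext ⟨a0, a1, a2, a3⟩
  simp only [Set.mem_setOf_eq, Set.mem_insert_iff, Set.mem_singleton_iff, Prod.mk.injEq]
  constructor
  · rintro ⟨hp0, hp1, hp2, hp3, h01, h12, h23, g1, g2, g3, g4, d0, d1, d2, d3⟩
    obtain ⟨b0, hb0⟩ := d0
    obtain ⟨b1, hb1⟩ := d1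
    obtain ⟨b2, hb2⟩ := d2
    obtain ⟨b3, hb3⟩ := d3
    have hs : 0 < a0+a1+a2+a3 := by omega
    have q0 : 0 < b0 := Nat.pos_of_ne_zero fun h => by subst h; omega
    have q1 : 0 < b1 := Nat.pos_of_ne_zero fun h => by subst h; omega
    have q2 : 0 < b2 := Nat.pos_of_ne_zero fun h => by subst h; omega
    have q3 : 0 < b3 := Nat.pos_of_ne_zero fun h => by subst h; omega
    have o32 : b3 ≤ b2 := by
      refine Nat.le_of_mul_le_mul_left ?_ hp2
      rw [← hb2, hb3]
      exact Nat.mul_le_mul h23 le_rfl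
    have o21 : b2 ≤ b1 := by
      refine Nat.le_of_mul_le_mul_left ?_ hp1
      rw [← hb1, hb2]
      exact Nat.mul_le_mul h12 le_rfl
    have o10 : b1 ≤ b0 := by
      refine Nat.le_of_mul_le_mul_left ?_ hp0
      rw [← hb0, hb1]
      exact Nat.mul_le_mul h01 le_rfl
    have q3lo : 2 ≤ b3 := by
      by_contra h
      interval_cases b3 <;> omega
    have q3hi : b3 ≤ 4 := by
      refine Nat.le_of_mul_le_mul_left ?_ hp3
      rw [← hb3]
      omega
    have E : b1*(b2*b3) + b0*(b2*b3) + b0*(b1*b3) + b0*(b1*b2) = b0*(b1*(b2*b3)) := by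
      have h : (a0+a1+a2+a3) * (b1*(b2*b3) + b0*(b2*b3) + b0*(b1*b3) + b0*(b1*b2))
          = (a0+a1+a2+a3) * (b0*(b1*(b2*b3))) := by
        conv_rhs => rw [show (a0+a1+a2+a3) * (b0*(b1*(b2*b3)))
          = (a0*b0)*(b1*(b2*b3)) + (a1*b1)*(b0*(b2*b3)) + (a2*b2)*(b0*(b1*b3))
            + (a3*b3)*(b0*(b1*b2)) from by ring]
        rw [← hb0, ← hb1, ← hb2, ← hb3]
        ring
      exact Nat.eq_of_mul_eq_mul_left hs h
    have t1 : b2*(b1*b3) ≤ b0*(b1*b3) := Nat.mul_le_mul (o21.trans o10) le_rfl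
    have t2 : b2*(b0*b3) ≤ b1*(b0*b3) := Nat.mul_le_mul o21 le_rfl
    have t3 : b1*(b2*b3) ≤ b0*(b2*b3) := Nat.mul_le_mul o10 le_rfl
    have o2 : b2*b3 ≤ b2 + 3*b3 := by
      have hb01 : 0 < b0*b1 := Nat.mul_pos q0 q1
      refine Nat.le_of_mul_le_mul_left ?_ hb01
      linarith [E, t1, t2]
    have o1 : b1*(b2*b3) ≤ b1*b2 + b1*b3 + 2*(b2*b3) := by
      refine Nat.le_of_mul_le_mul_left ?_ q0
      linarith [E, t3]
    interval_cases b3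
    · -- b3 = 2
      have hb2hi : b2 ≤ 6 := by omega
      interval_cases b2
      · exfalso; linarith [E]
      · have hb1hi : b1 ≤ 12 := by omega
        interval_cases b1
        · exfalso; omega
        · exfalso; omega
        · exfalso; omega
        · exfalso; omega
        · have hB : b0 = 42 := by omega
          subst hB
          obtain ⟨t, ht⟩ : (42:ℕ) ∣ a0+a1+a2+a3 := by omega
          have h1 : t ∣ a1 := ⟨6, by omega⟩
          have h2 : t ∣ a2 := ⟨14, by omega⟩
          have h3 : t ∣ a3 := ⟨21, by omega⟩
          have h4 := Nat.dvd_gcd (Nat.dvd_gcd h1 h2) h3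
          rw [g1] at h4
          have ht1 := Nat.dvd_one.mp h4
          exact Or.inr (Or.inr (Or.inr (Or.inr (Or.inr (Or.inr (Or.inr (Or.inr (Or.inr (Or.inr (Or.inr (Or.inl (⟨by omega, by omega, by omega, by omega⟩))))))))))))
        · have hB : b0 = 24 := by omega
          subst hB
          obtain ⟨t, ht⟩ : (24:ℕ) ∣ a0+a1+a2+a3 := by omega
          have h1 : t ∣ a1 := ⟨3, by omega⟩
          have h2 : t ∣ a2 := ⟨8, by omega⟩
          have h3 : t ∣ a3 := ⟨12, by omega⟩
          have h4 := Nat.dvd_gcd (Nat.dvd_gcd h1 h2) h3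
          rw [g1] at h4
          have ht1 := Nat.dvd_one.mp h4
          exact Or.inr (Or.inr (Or.inr (Or.inr (Or.inr (Or.inr (Or.inr (Or.inr (Or.inr (Or.inl (⟨by omega, by omega, by omega, by omega⟩))))))))))
        · have hB : b0 = 18 := by omega
          subst hB
          obtain ⟨t, ht⟩ : (18:ℕ) ∣ a0+a1+a2+a3 := by omega
          have h1 : t ∣ a1 := ⟨2, by omega⟩
          have h2 : t ∣ a2 := ⟨6, by omega⟩
          have h3 : t ∣ a3 := ⟨9, by omega⟩
          have h4 := Nat.dvd_gcd (Nat.dvd_gcd h1 h2) h3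
          rw [g1] at h4
          have ht1 := Nat.dvd_one.mp h4
          exact Or.inr (Or.inr (Or.inr (Or.inr (Or.inr (Or.inr (Or.inr (Or.inl (⟨by omega, by omega, by omega, by omega⟩))))))))
        · have hB : b0 = 15 := by omega
          subst hB
          obtain ⟨t, ht⟩ : (30:ℕ) ∣ a0+a1+a2+a3 := by omega
          have h1 : t ∣ a1 := ⟨3, by omega⟩
          have h2 : t ∣ a2 := ⟨10, by omega⟩
          have h3 : t ∣ a3 := ⟨15, by omega⟩
          have h4 := Nat.dvd_gcd (Nat.dvd_gcd h1 h2) h3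
          rw [g1] at h4
          have ht1 := Nat.dvd_one.mp h4
          exact Or.inr (Or.inr (Or.inr (Or.inr (Or.inr (Or.inr (Or.inr (Or.inr (Or.inr (Or.inr (Or.inr (Or.inr (Or.inr (⟨by omega, by omega, by omega, by omega⟩)))))))))))))
        · exfalso; omega
        · have hB : b0 = 12 := by omega
          subst hB
          obtain ⟨t, ht⟩ : (12:ℕ) ∣ a0+a1+a2+a3 := by omega
          have h1 : t ∣ a1 := ⟨1, by omega⟩
          have h2 : t ∣ a2 := ⟨4, by omega⟩
          have h3 : t ∣ a3 := ⟨6, by omega⟩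
          have h4 := Nat.dvd_gcd (Nat.dvd_gcd h1 h2) h3
          rw [g1] at h4
          have ht1 := Nat.dvd_one.mp h4
          exact Or.inr (Or.inr (Or.inr (Or.inr (Or.inl (⟨by omega, by omega, by omega, by omega⟩)))))
      · have hb1hi : b1 ≤ 8 := by omega
        interval_cases b1
        · exfalso; omega
        · have hB : b0 = 20 := by omega
          subst hB
          obtain ⟨t, ht⟩ : (20:ℕ) ∣ a0+a1+a2+a3 := by omega
          have h1 : t ∣ a1 := ⟨4, by omega⟩
          have h2 : t ∣ a2 := ⟨5, by omega⟩
          have h3 : t ∣ a3 := ⟨10, by omega⟩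
          have h4 := Nat.dvd_gcd (Nat.dvd_gcd h1 h2) h3
          rw [g1] at h4
          have ht1 := Nat.dvd_one.mp h4
          exact Or.inr (Or.inr (Or.inr (Or.inr (Or.inr (Or.inr (Or.inr (Or.inr (Or.inr (Or.inr (Or.inl (⟨by omega, by omega, by omega, by omega⟩)))))))))))
        · have hB : b0 = 12 := by omega
          subst hB
          obtain ⟨t, ht⟩ : (12:ℕ) ∣ a0+a1+a2+a3 := by omega
          have h1 : t ∣ a1 := ⟨2, by omega⟩
          have h2 : t ∣ a2 := ⟨3, by omega⟩
          have h3 : t ∣ a3 := ⟨6, by omega⟩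
          have h4 := Nat.dvd_gcd (Nat.dvd_gcd h1 h2) h3
          rw [g1] at h4
          have ht1 := Nat.dvd_one.mp h4
          exact Or.inr (Or.inr (Or.inr (Or.inr (Or.inr (Or.inr (Or.inl (⟨by omega, by omega, by omega, by omega⟩)))))))
        · exfalso; omega
        · have hB : b0 = 8 := by omega
          subst hB
          obtain ⟨t, ht⟩ : (8:ℕ) ∣ a0+a1+a2+a3 := by omega
          have h1 : t ∣ a1 := ⟨1, by omega⟩
          have h2 : t ∣ a2 := ⟨2, by omega⟩
          have h3 : t ∣ a3 := ⟨4, by omega⟩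
          have h4 := Nat.dvd_gcd (Nat.dvd_gcd h1 h2) h3
          rw [g1] at h4
          have ht1 := Nat.dvd_one.mp h4
          exact Or.inr (Or.inr (Or.inr (Or.inl (⟨by omega, by omega, by omega, by omega⟩))))
      · have hb1hi : b1 ≤ 6 := by omega
        interval_cases b1
        · have hB : b0 = 10 := by omega
          subst hB
          obtain ⟨t, ht⟩ : (10:ℕ) ∣ a0+a1+a2+a3 := by omega
          have h1 : t ∣ a1 := ⟨2, by omega⟩
          have h2 : t ∣ a2 := ⟨2, by omega⟩
          have h3 : t ∣ a3 := ⟨5, by omega⟩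
          have h4 := Nat.dvd_gcd (Nat.dvd_gcd h1 h2) h3
          rw [g1] at h4
          have ht1 := Nat.dvd_one.mp h4
          exact Or.inr (Or.inr (Or.inr (Or.inr (Or.inr (Or.inl (⟨by omega, by omega, by omega, by omega⟩))))))
        · exfalso; omega
      · have hb1hi : b1 ≤ 6 := by omega
        interval_cases b1
        · have hB : b0 = 6 := by omega
          subst hB
          obtain ⟨t, ht⟩ : (6:ℕ) ∣ a0+a1+a2+a3 := by omega
          have h1 : t ∣ a1 := ⟨1, by omega⟩
          have h2 : t ∣ a2 := ⟨1, by omega⟩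
          have h3 : t ∣ a3 := ⟨3, by omega⟩
          have h4 := Nat.dvd_gcd (Nat.dvd_gcd h1 h2) h3
          rw [g1] at h4
          have ht1 := Nat.dvd_one.mp h4
          exact Or.inr (Or.inl (⟨by omega, by omega, by omega, by omega⟩))
    · -- b3 = 3
      have hb2hi : b2 ≤ 4 := by omega
      interval_cases b2
      · have hb1hi : b1 ≤ 6 := by omega
        interval_cases b1
        · exfalso; omega
        · have hB : b0 = 12 := by omega
          subst hB
          obtain ⟨t, ht⟩ : (12:ℕ) ∣ a0+a1+a2+a3 := by omega
          have h1 : t ∣ a1 := ⟨3, by omega⟩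
          have h2 : t ∣ a2 := ⟨4, by omega⟩
          have h3 : t ∣ a3 := ⟨4, by omega⟩
          have h4 := Nat.dvd_gcd (Nat.dvd_gcd h1 h2) h3
          rw [g1] at h4
          have ht1 := Nat.dvd_one.mp h4
          exact Or.inr (Or.inr (Or.inr (Or.inr (Or.inr (Or.inr (Or.inr (Or.inr (Or.inl (⟨by omega, by omega, by omega, by omega⟩)))))))))
        · exfalso; omega
        · have hB : b0 = 6 := by omega
          subst hB
          obtain ⟨t, ht⟩ : (6:ℕ) ∣ a0+a1+a2+a3 := by omega
          have h1 : t ∣ a1 := ⟨1, by omega⟩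
          have h2 : t ∣ a2 := ⟨2, by omega⟩
          have h3 : t ∣ a3 := ⟨2, by omega⟩
          have h4 := Nat.dvd_gcd (Nat.dvd_gcd h1 h2) h3
          rw [g1] at h4
          have ht1 := Nat.dvd_one.mp h4
          exact Or.inr (Or.inr (Or.inl (⟨by omega, by omega, by omega, by omega⟩)))
      · have hb1hi : b1 ≤ 4 := by omega
        interval_cases b1
        · have hB : b0 = 6 := by omega
          subst hB
          obtain ⟨t, ht⟩ : (12:ℕ) ∣ a0+a1+a2+a3 := by omega
          have h1 : t ∣ a1 := ⟨3, by omega⟩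
          have h2 : t ∣ a2 := ⟨3, by omega⟩
          have h3 : t ∣ a3 := ⟨4, by omega⟩
          have h4 := Nat.dvd_gcd (Nat.dvd_gcd h1 h2) h3
          rw [g1] at h4
          have ht1 := Nat.dvd_one.mp h4
          exact Or.inr (Or.inr (Or.inr (Or.inr (Or.inr (Or.inr (Or.inr (Or.inr (Or.inr (Or.inr (Or.inr (Or.inr (Or.inl (⟨by omega, by omega, by omega, by omega⟩)))))))))))))
    · -- b3 = 4
      have hb2hi : b2 ≤ 4 := by omega
      interval_cases b2
      · have hb1hi : b1 ≤ 4 := by omega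
        interval_cases b1
        · have hB : b0 = 4 := by omega
          subst hB
          obtain ⟨t, ht⟩ : (4:ℕ) ∣ a0+a1+a2+a3 := by omega
          have h1 : t ∣ a1 := ⟨1, by omega⟩
          have h2 : t ∣ a2 := ⟨1, by omega⟩
          have h3 : t ∣ a3 := ⟨1, by omega⟩
          have h4 := Nat.dvd_gcd (Nat.dvd_gcd h1 h2) h3
          rw [g1] at h4
          have ht1 := Nat.dvd_one.mp h4
          exact Or.inl (⟨by omega, by omega, by omega, by omega⟩)
  · rintro (h|h|h|h|h|h|h|h|h|h|h|h|h|h) <;> obtain ⟨rfl, rfl, rfl, rfl⟩ := h <;> norm_num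
end

section
/- The images in R of the monomials x_1^{a_1} x_2^{a_2} x_3^{a_3} x_4^{a_4} x_5^{a_5} x_6^{a_6}, where a_1, a_3, a_4, a_6 range over all nonnegative integers and a_2, a_5 range over {0, 1}, form a basis of R as a ℂ-vector space. -/
/-!
The span of the standard monomials contains `1` and is stable under multiplication by each `xᵢ`:
only `x₂` and `x₅` can leave the range, and the relations `x₂² = x₁x₃`, `x₅² = x₄x₆` bring their
exponents back to `{0, 1}`. Since the `xᵢ` generate `R`, the span is everything.

For independence, send `x₂, x₅` to the square roots `y, z` in
`K[y, z] / (y² − x₁x₃, z² − x₄x₆)`, `K = ℂ[x₁, x₃, x₄, x₆]`, built as two successive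
`AdjoinRoot`s. That ring is free over `ℂ` on the monomials of `K` times `yⁱ zʲ` with `i, j < 2`,
and the standard monomials go to distinct basis vectors.
-/

open MvPolynomial

/-- The ideal of `ℂ[x₁,…,x₆]` generated by `x₂² − x₁x₃` and `x₅² − x₄x₆`
(variables are 0-indexed: `X 0 = x₁`, …, `X 5 = x₆`). -/
noncomputable def I6 : Ideal (MvPolynomial (Fin 6) ℂ) :=
  Ideal.span {X 1 ^ 2 - X 0 * X 2, X 4 ^ 2 - X 3 * X 5}

/-- The image in `R = ℂ[x₁,…,x₆]/(x₂² − x₁x₃, x₅² − x₄x₆)` of the monomial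
`x₁^{a₁} x₂^{a₂} x₃^{a₃} x₄^{a₄} x₅^{a₅} x₆^{a₆}`, where `a₁, a₃, a₄, a₆ ∈ ℕ`
and `a₂, a₅ ∈ {0, 1}` (the index is `(a₁, a₂, a₃, a₄, a₅, a₆)`). -/
noncomputable def stdMonomial (a : ℕ × Fin 2 × ℕ × ℕ × Fin 2 × ℕ) :
    MvPolynomial (Fin 6) ℂ ⧸ I6 :=
  Ideal.Quotient.mk I6
    (X 0 ^ a.1 * X 1 ^ (a.2.1 : ℕ) * X 2 ^ a.2.2.1 * X 3 ^ a.2.2.2.1 *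
      X 4 ^ (a.2.2.2.2.1 : ℕ) * X 5 ^ a.2.2.2.2.2)

namespace AdjoinRoot

variable {R : Type*} [CommRing R]

theorem root_X_pow_sub_C_pow (n : ℕ) (c : R) :
    root (Polynomial.X ^ n - Polynomial.C c) ^ n = of _ c := by
  rw [← sub_eq_zero, ← mk_X, ← mk_C, ← map_pow, ← map_sub, mk_self]

theorem nontrivial_X_pow_sub_C [Nontrivial R] {n : ℕ} (hn : n ≠ 0) (c : R) :
    Nontrivial (AdjoinRoot (Polynomial.X ^ n - Polynomial.C c)) :=
  Ideal.Quotient.nontrivial_iff.mpr <| by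
    rw [Ne, Ideal.span_singleton_eq_top, (Polynomial.monic_X_pow_sub_C c hn).isUnit_iff]
    intro h
    exact hn (by simpa [h] using (Polynomial.natDegree_X_pow_sub_C (n := n) (r := c)).symm)

noncomputable def basisXPowSubC [Nontrivial R] {n : ℕ} (hn : n ≠ 0) (c : R) :
    Module.Basis (Fin n) R (AdjoinRoot (Polynomial.X ^ n - Polynomial.C c)) :=
  (powerBasis' (Polynomial.monic_X_pow_sub_C c hn)).basis.reindex
    (finCongr Polynomial.natDegree_X_pow_sub_C)

theorem basisXPowSubC_apply [Nontrivial R] {n : ℕ} (hn : n ≠ 0) (c : R) (i : Fin n) :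
    basisXPowSubC hn c i = root (Polynomial.X ^ n - Polynomial.C c) ^ (i : ℕ) := by
  simp only [basisXPowSubC, Module.Basis.coe_reindex, PowerBasis.coe_basis, powerBasis'_gen,
    Function.comp_apply]
  rfl

end AdjoinRoot

theorem Submodule.eq_top_of_one_mem_of_mul_mem {R A : Type*} [CommSemiring R] [Semiring A]
    [Algebra R A] {s : Set A} (hs : Algebra.adjoin R s = ⊤) (M : Submodule R A) (h1 : 1 ∈ M)
    (hmul : ∀ a ∈ s, ∀ m ∈ M, a * m ∈ M) : M = ⊤ := by
  have key : ∀ a : A, ∀ m ∈ M, a * m ∈ M := by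
    intro a
    have ha : a ∈ Algebra.adjoin R s := hs ▸ Algebra.mem_top
    induction ha using Algebra.adjoin_induction with
    | mem a ha => exact hmul a ha
    | algebraMap r => intro m hm; simpa [← Algebra.smul_def] using M.smul_mem r hm
    | add a b _ _ iha ihb => intro m hm; rw [add_mul]; exact M.add_mem (iha m hm) (ihb m hm)
    | mul a b _ _ iha ihb => intro m hm; rw [mul_assoc]; exact iha _ (ihb m hm)
  exact eq_top_iff.mpr fun a _ => mul_one a ▸ key a 1 h1

section Spanning

theorem stdMonomial_eq (a : ℕ × Fin 2 × ℕ × ℕ × Fin 2 × ℕ) :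
    stdMonomial a = Ideal.Quotient.mk I6 (X 0) ^ a.1 * Ideal.Quotient.mk I6 (X 1) ^ (a.2.1 : ℕ) *
      Ideal.Quotient.mk I6 (X 2) ^ a.2.2.1 * Ideal.Quotient.mk I6 (X 3) ^ a.2.2.2.1 *
      Ideal.Quotient.mk I6 (X 4) ^ (a.2.2.2.2.1 : ℕ) * Ideal.Quotient.mk I6 (X 5) ^ a.2.2.2.2.2 := by
  simp only [stdMonomial, map_mul, map_pow]

theorem mk_X_one_sq :
    Ideal.Quotient.mk I6 (X 1) ^ 2 = Ideal.Quotient.mk I6 (X 0) * Ideal.Quotient.mk I6 (X 2) := by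
  rw [← map_pow, ← map_mul, Ideal.Quotient.eq]
  exact Ideal.subset_span (by simp)

theorem mk_X_four_sq :
    Ideal.Quotient.mk I6 (X 4) ^ 2 = Ideal.Quotient.mk I6 (X 3) * Ideal.Quotient.mk I6 (X 5) := by
  rw [← map_pow, ← map_mul, Ideal.Quotient.eq]
  exact Ideal.subset_span (by simp)

theorem mk_X_mul_stdMonomial_mem_range (i : Fin 6) (a : ℕ × Fin 2 × ℕ × ℕ × Fin 2 × ℕ) :
    Ideal.Quotient.mk I6 (X i) * stdMonomial a ∈ Set.range stdMonomial := by
  obtain ⟨a1, a2, a3, a4, a5, a6⟩ := a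
  fin_cases i <;> simp only [Fin.reduceFinMk]
  · exact ⟨(a1 + 1, a2, a3, a4, a5, a6), by simp only [stdMonomial_eq]; ring⟩
  · fin_cases a2 <;> simp only [Fin.zero_eta, Fin.mk_one]
    · exact ⟨(a1, 1, a3, a4, a5, a6), by simp only [stdMonomial_eq, Fin.val_zero, Fin.val_one]; ring⟩
    · refine ⟨(a1 + 1, 0, a3 + 1, a4, a5, a6), ?_⟩
      linear_combination (norm := (simp only [stdMonomial_eq, Fin.val_zero, Fin.val_one]; ring))
        stdMonomial (a1, 0, a3, a4, a5, a6) * mk_X_one_sq.symm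
  · exact ⟨(a1, a2, a3 + 1, a4, a5, a6), by simp only [stdMonomial_eq]; ring⟩
  · exact ⟨(a1, a2, a3, a4 + 1, a5, a6), by simp only [stdMonomial_eq]; ring⟩
  · fin_cases a5 <;> simp only [Fin.zero_eta, Fin.mk_one]
    · exact ⟨(a1, a2, a3, a4, 1, a6), by simp only [stdMonomial_eq, Fin.val_zero, Fin.val_one]; ring⟩
    · refine ⟨(a1, a2, a3, a4 + 1, 0, a6 + 1), ?_⟩
      linear_combination (norm := (simp only [stdMonomial_eq, Fin.val_zero, Fin.val_one]; ring))
        stdMonomial (a1, a2, a3, a4, 0, a6) * mk_X_four_sq.symm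
  · exact ⟨(a1, a2, a3, a4, a5, a6 + 1), by simp only [stdMonomial_eq]; ring⟩

theorem adjoin_range_mk_X_eq_top :
    Algebra.adjoin ℂ (Set.range fun i => Ideal.Quotient.mk I6 (X i : MvPolynomial (Fin 6) ℂ)) =
      ⊤ := by
  have hrange : (Set.range fun i => Ideal.Quotient.mk I6 (X i : MvPolynomial (Fin 6) ℂ)) =
      Ideal.Quotient.mkₐ ℂ I6 '' Set.range X := by
    rw [← Set.range_comp]
    rfl
  rw [hrange, Algebra.adjoin_image, adjoin_range_X, Algebra.map_top, AlgHom.range_eq_top]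
  exact Ideal.Quotient.mkₐ_surjective ℂ I6

theorem span_range_stdMonomial_eq_top : Submodule.span ℂ (Set.range stdMonomial) = ⊤ := by
  refine Submodule.eq_top_of_one_mem_of_mul_mem adjoin_range_mk_X_eq_top _ ?_ ?_
  · exact Submodule.subset_span ⟨0, by simp [stdMonomial]⟩
  · rintro _ ⟨i, rfl⟩ m hm
    have hle : Submodule.span ℂ (Set.range stdMonomial) ≤
        (Submodule.span ℂ (Set.range stdMonomial)).comap
          (LinearMap.mulLeft ℂ (Ideal.Quotient.mk I6 (X i))) := by
      rw [Submodule.span_le]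
      rintro _ ⟨a, rfl⟩
      exact Submodule.subset_span (mk_X_mul_stdMonomial_mem_range i a)
    exact hle hm

end Spanning

section Independence

/-- `X 0, X 1, X 2, X 3` stand for `x₁, x₃, x₄, x₆`. -/
abbrev ModelBase : Type := MvPolynomial (Fin 4) ℂ

abbrev ModelMid : Type := AdjoinRoot (Polynomial.X ^ 2 - Polynomial.C (X 0 * X 1 : ModelBase))

instance : Nontrivial ModelMid := AdjoinRoot.nontrivial_X_pow_sub_C two_ne_zero _

abbrev Model : Type :=
  AdjoinRoot (Polynomial.X ^ 2 - Polynomial.C (algebraMap ModelBase ModelMid (X 2 * X 3)))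

noncomputable def modelBasis : Module.Basis (((Fin 4 →₀ ℕ) × Fin 2) × Fin 2) ℂ Model :=
  ((basisMonomials (Fin 4) ℂ).smulTower (AdjoinRoot.basisXPowSubC two_ne_zero _)).smulTower
    (AdjoinRoot.basisXPowSubC two_ne_zero _)

noncomputable def modelVar : Fin 6 → Model :=
  ![algebraMap ModelBase Model (X 0), algebraMap ModelMid Model (AdjoinRoot.root _),
    algebraMap ModelBase Model (X 1), algebraMap ModelBase Model (X 2), AdjoinRoot.root _,
    algebraMap ModelBase Model (X 3)]

theorem modelVar_one_sq : modelVar 1 ^ 2 = modelVar 0 * modelVar 2 := by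
  change algebraMap ModelMid Model (AdjoinRoot.root _) ^ 2 =
    algebraMap ModelBase Model (X 0) * algebraMap ModelBase Model (X 1)
  rw [← map_pow, AdjoinRoot.root_X_pow_sub_C_pow, ← map_mul,
    IsScalarTower.algebraMap_apply ModelBase ModelMid Model]
  rfl

theorem modelVar_four_sq : modelVar 4 ^ 2 = modelVar 3 * modelVar 5 := by
  change AdjoinRoot.root _ ^ 2 = algebraMap ModelBase Model (X 2) * algebraMap ModelBase Model (X 3)
  rw [AdjoinRoot.root_X_pow_sub_C_pow, ← map_mul,
    IsScalarTower.algebraMap_apply ModelBase ModelMid Model]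
  rfl

theorem I6_le_ker_aeval_modelVar : I6 ≤ RingHom.ker (aeval (R := ℂ) modelVar) := by
  rw [I6, Ideal.span_le]
  rintro p (rfl | rfl) <;>
    simp only [SetLike.mem_coe, RingHom.mem_ker, map_sub, map_mul, map_pow, aeval_X, sub_eq_zero,
      modelVar_one_sq, modelVar_four_sq]

noncomputable def toModel : (MvPolynomial (Fin 6) ℂ ⧸ I6) →ₐ[ℂ] Model :=
  Ideal.Quotient.liftₐ I6 (aeval modelVar) fun _ ha => I6_le_ker_aeval_modelVar ha

theorem toModel_mk (p : MvPolynomial (Fin 6) ℂ) :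
    toModel (Ideal.Quotient.mk I6 p) = aeval modelVar p :=
  rfl

noncomputable def modelIndex (a : ℕ × Fin 2 × ℕ × ℕ × Fin 2 × ℕ) :
    ((Fin 4 →₀ ℕ) × Fin 2) × Fin 2 :=
  ((Finsupp.equivFunOnFinite.symm ![a.1, a.2.2.1, a.2.2.2.1, a.2.2.2.2.2], a.2.1), a.2.2.2.2.1)

theorem modelIndex_injective : Function.Injective modelIndex := by
  rintro ⟨a1, a2, a3, a4, a5, a6⟩ ⟨b1, b2, b3, b4, b5, b6⟩ h
  simp only [modelIndex, Prod.mk.injEq, EmbeddingLike.apply_eq_iff_eq, Matrix.vecCons_inj,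
    and_true] at h
  obtain ⟨⟨⟨rfl, rfl, rfl, rfl⟩, rfl⟩, rfl⟩ := h
  rfl

theorem toModel_stdMonomial (a : ℕ × Fin 2 × ℕ × ℕ × Fin 2 × ℕ) :
    toModel (stdMonomial a) = modelBasis (modelIndex a) := by
  obtain ⟨a1, a2, a3, a4, a5, a6⟩ := a
  have hmonomial : (monomial (Finsupp.equivFunOnFinite.symm ![a1, a3, a4, a6]) 1 : ModelBase) =
      X 0 ^ a1 * X 1 ^ a3 * X 2 ^ a4 * X 3 ^ a6 := by
    simp [monomial_eq, Finsupp.prod_fintype, Fin.prod_univ_four]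
  simp only [stdMonomial, toModel_mk, map_mul, map_pow, aeval_X, modelBasis,
    Module.Basis.smulTower_apply, coe_basisMonomials, AdjoinRoot.basisXPowSubC_apply, modelIndex,
    hmonomial, Algebra.smul_def, ← IsScalarTower.algebraMap_apply, modelVar, Matrix.cons_val]
  ring

theorem linearIndependent_stdMonomial : LinearIndependent ℂ stdMonomial := by
  refine LinearIndependent.of_comp toModel.toLinearMap ?_
  have hcomp : ⇑toModel.toLinearMap ∘ stdMonomial = modelBasis ∘ modelIndex :=
    funext toModel_stdMonomial
  rw [hcomp]
  exact modelBasis.linearIndependent.comp _ modelIndex_injective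

end Independence

/-- those monomial classes form a ℂ-vector space basis of `R`. -/
theorem stmt_10 :
    LinearIndependent ℂ stdMonomial ∧
    Submodule.span ℂ (Set.range stdMonomial) = ⊤ :=
  ⟨linearIndependent_stdMonomial, span_range_stdMonomial_eq_top⟩
end

section
/- The set of quadruples (u_3, u_2, u_1, u_0) in M whose degree u_3 + u_2 + u_1 + u_0 equals 1 is exactly the six-element set {(1,0,0,0), (1/2,1/2,0,0), (0,1,0,0), (0,0,1,0), (0,0,1/2,1/2), (0,0,0,1)}. -/
/-- The monoid `M` of quadruples `(u₃, u₂, u₁, u₀)` of nonnegative rationals with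
`2u₃ ∈ ℤ`, `u₃ + u₂ ∈ ℤ`, `2(u₃ + u₂ + u₁) ∈ ℤ` and `u₃ + u₂ + u₁ + u₀ ∈ ℤ`. -/
def Mset : Set (ℚ × ℚ × ℚ × ℚ) :=
  {u | 0 ≤ u.1 ∧ 0 ≤ u.2.1 ∧ 0 ≤ u.2.2.1 ∧ 0 ≤ u.2.2.2 ∧
    (∃ z : ℤ, 2 * u.1 = z) ∧
    (∃ z : ℤ, u.1 + u.2.1 = z) ∧
    (∃ z : ℤ, 2 * (u.1 + u.2.1 + u.2.2.1) = z) ∧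
    (∃ z : ℤ, u.1 + u.2.1 + u.2.2.1 + u.2.2.2 = z)}

/-- the degree-one elements of `M` are exactly the six listed quadruples. -/
theorem stmt_13 :
    {u ∈ Mset | u.1 + u.2.1 + u.2.2.1 + u.2.2.2 = 1} =
      {(1, 0, 0, 0), (1/2, 1/2, 0, 0), (0, 1, 0, 0),
       (0, 0, 1, 0), (0, 0, 1/2, 1/2), (0, 0, 0, 1)} := by
  ext ⟨a, b, c, d⟩
  simp only [Mset, Set.mem_setOf_eq, Set.mem_insert_iff, Set.mem_singleton_iff,
    Prod.mk.injEq]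
  constructor
  · rintro ⟨⟨ha, hb, hc, hd, ⟨z1, h1⟩, ⟨z2, h2⟩, ⟨z3, h3⟩, ⟨z4, h4⟩⟩, hsum⟩
    have b1 : (0 : ℚ) ≤ (z1 : ℚ) := by rw [← h1]; linarith
    have b2 : (z1 : ℚ) ≤ 2 := by rw [← h1]; linarith
    have b3 : (0 : ℚ) ≤ (z2 : ℚ) := by rw [← h2]; linarith
    have b4 : (z2 : ℚ) ≤ 1 := by rw [← h2]; linarith
    have b5 : (0 : ℚ) ≤ (z3 : ℚ) := by rw [← h3]; linarith
    have b6 : (z3 : ℚ) ≤ 2 := by rw [← h3]; linarith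
    have i1 : (0 : ℤ) ≤ z1 := by exact_mod_cast b1
    have i2 : z1 ≤ 2 := by exact_mod_cast b2
    have i3 : (0 : ℤ) ≤ z2 := by exact_mod_cast b3
    have i4 : z2 ≤ 1 := by exact_mod_cast b4
    have i5 : (0 : ℤ) ≤ z3 := by exact_mod_cast b5
    have i6 : z3 ≤ 2 := by exact_mod_cast b6
    interval_cases z1 <;> interval_cases z2 <;> interval_cases z3 <;>
      push_cast at h1 h2 h3 <;>
      first
      | (exfalso; linarith)
      | (exact Or.inl ⟨by linarith, by linarith, by linarith, by linarith⟩)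
      | (exact Or.inr (Or.inl ⟨by linarith, by linarith, by linarith, by linarith⟩))
      | (exact Or.inr (Or.inr (Or.inl ⟨by linarith, by linarith, by linarith, by linarith⟩)))
      | (exact Or.inr (Or.inr (Or.inr (Or.inl ⟨by linarith, by linarith, by linarith, by linarith⟩))))
      | (exact Or.inr (Or.inr (Or.inr (Or.inr (Or.inl ⟨by linarith, by linarith, by linarith, by linarith⟩)))))
      | (exact Or.inr (Or.inr (Or.inr (Or.inr (Or.inr ⟨by linarith, by linarith, by linarith, by linarith⟩)))))
  · rintro (⟨rfl, rfl, rfl, rfl⟩ | ⟨rfl, rfl, rfl, rfl⟩ | ⟨rfl, rfl, rfl, rfl⟩ |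
      ⟨rfl, rfl, rfl, rfl⟩ | ⟨rfl, rfl, rfl, rfl⟩ | ⟨rfl, rfl, rfl, rfl⟩)
    · exact ⟨⟨by norm_num, by norm_num, by norm_num, by norm_num, ⟨2, by norm_num⟩,
        ⟨1, by norm_num⟩, ⟨2, by norm_num⟩, ⟨1, by norm_num⟩⟩, by norm_num⟩
    · exact ⟨⟨by norm_num, by norm_num, by norm_num, by norm_num, ⟨1, by norm_num⟩,
        ⟨1, by norm_num⟩, ⟨2, by norm_num⟩, ⟨1, by norm_num⟩⟩, by norm_num⟩
    · exact ⟨⟨by norm_num, by norm_num, by norm_num, by norm_num, ⟨0, by norm_num⟩,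
        ⟨1, by norm_num⟩, ⟨2, by norm_num⟩, ⟨1, by norm_num⟩⟩, by norm_num⟩
    · exact ⟨⟨by norm_num, by norm_num, by norm_num, by norm_num, ⟨0, by norm_num⟩,
        ⟨0, by norm_num⟩, ⟨2, by norm_num⟩, ⟨1, by norm_num⟩⟩, by norm_num⟩
    · exact ⟨⟨by norm_num, by norm_num, by norm_num, by norm_num, ⟨0, by norm_num⟩,
        ⟨0, by norm_num⟩, ⟨1, by norm_num⟩, ⟨1, by norm_num⟩⟩, by norm_num⟩
    · exact ⟨⟨by norm_num, by norm_num, by norm_num, by norm_num, ⟨0, by norm_num⟩,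
        ⟨0, by norm_num⟩, ⟨0, by norm_num⟩, ⟨1, by norm_num⟩⟩, by norm_num⟩
end

section
/- The map sending a six-tuple (a_1, a_2, a_3, a_4, a_5, a_6) of nonnegative integers with a_2 ∈ {0,1} and a_5 ∈ {0,1} to the quadruple (a_1 + a_2/2, a_3 + a_2/2, a_4 + a_5/2, a_6 + a_5/2) of rational numbers is a bijection from the set of such six-tuples onto the monoid M. -/
def halfIntPairs : Set (ℚ × ℚ) :=
  {p | 0 ≤ p.1 ∧ 0 ≤ p.2 ∧ (∃ z : ℤ, 2 * p.1 = z) ∧ ∃ z : ℤ, p.1 + p.2 = z}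

def halfPair (a e c : ℕ) : ℚ × ℚ := (a + e / 2, c + e / 2)

lemma mem_Mset_iff (u : ℚ × ℚ × ℚ × ℚ) :
    u ∈ Mset ↔ (u.1, u.2.1) ∈ halfIntPairs ∧ (u.2.2.1, u.2.2.2) ∈ halfIntPairs := by
  obtain ⟨x, y, z, w⟩ := u
  simp only [Mset, halfIntPairs, Set.mem_ofPred_eq]
  constructor
  · rintro ⟨hx, hy, hz, hw, h2x, ⟨m, hm⟩, ⟨n, hn⟩, ⟨k, hk⟩⟩
    exact ⟨⟨hx, hy, h2x, m, hm⟩, hz, hw, ⟨n - 2 * m, by push_cast; linarith⟩,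
      ⟨k - m, by push_cast; linarith⟩⟩
  · rintro ⟨⟨hx, hy, h2x, m, hm⟩, hz, hw, ⟨n, hn⟩, ⟨k, hk⟩⟩
    exact ⟨hx, hy, hz, hw, h2x, ⟨m, hm⟩, ⟨2 * m + n, by push_cast; linarith⟩,
      ⟨m + k, by push_cast; linarith⟩⟩

lemma halfPair_mem_halfIntPairs (a e c : ℕ) : halfPair a e c ∈ halfIntPairs :=
  ⟨by simp only [halfPair]; positivity, by simp only [halfPair]; positivity,
    ⟨2 * a + e, by simp only [halfPair]; push_cast; ring⟩,
    ⟨a + e + c, by simp only [halfPair]; push_cast; ring⟩⟩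

lemma halfPair_inj {a e c a' e' c' : ℕ} (he : e ≤ 1) (he' : e' ≤ 1)
    (h : halfPair a e c = halfPair a' e' c') : a = a' ∧ e = e' ∧ c = c' := by
  simp only [halfPair, Prod.mk.injEq] at h
  have h₁ : 2 * a + e = 2 * a' + e' := by exact_mod_cast (by linarith [h.1] : (2 * a + e : ℚ) = 2 * a' + e')
  have h₂ : 2 * c + e = 2 * c' + e' := by exact_mod_cast (by linarith [h.2] : (2 * c + e : ℚ) = 2 * c' + e')
  omega

lemma exists_nat_eq_of_nonneg {q : ℚ} (hq : 0 ≤ q) (h : ∃ z : ℤ, q = z) : ∃ n : ℕ, q = n := by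
  obtain ⟨z, rfl⟩ := h
  lift z to ℕ using (by exact_mod_cast hq)
  exact ⟨z, rfl⟩

lemma exists_halfPair_eq {p : ℚ × ℚ} (hp : p ∈ halfIntPairs) :
    ∃ a e c : ℕ, e ≤ 1 ∧ halfPair a e c = p := by
  obtain ⟨x, y⟩ := p
  obtain ⟨hx, hy, h2x, hxy⟩ := hp
  obtain ⟨m, hm⟩ := exists_nat_eq_of_nonneg (by positivity) h2x
  obtain ⟨n, hn⟩ := exists_nat_eq_of_nonneg (by positivity) hxy
  have hmn : m ≤ 2 * n := by exact_mod_cast (by linarith : (m : ℚ) ≤ 2 * n)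
  have hdiv : ((2 * (m / 2) + m % 2 : ℕ) : ℚ) = m := by rw [Nat.div_add_mod]
  push_cast at hdiv
  refine ⟨m / 2, m % 2, n - m / 2 - m % 2, Nat.le_of_lt_succ (Nat.mod_lt m two_pos), ?_⟩
  simp only [halfPair, Prod.mk.injEq]
  rw [Nat.cast_sub (by omega), Nat.cast_sub (by omega)]
  constructor <;> linarith

/-- the map sending a six-tuple `(a₁, …, a₆)` of nonnegative integers
with `a₂, a₅ ∈ {0, 1}` to `(a₁ + a₂/2, a₃ + a₂/2, a₄ + a₅/2, a₆ + a₅/2)` is a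
bijection from the set of such six-tuples onto `M`.
(The six-tuple is encoded as `a : Fin 6 → ℕ` with `a i` standing for `a_{i+1}`.) -/
theorem stmt_14 :
    Set.BijOn
      (fun a : Fin 6 → ℕ =>
        (((a 0 : ℚ) + (a 1 : ℚ) / 2, (a 2 : ℚ) + (a 1 : ℚ) / 2,
          (a 3 : ℚ) + (a 4 : ℚ) / 2, (a 5 : ℚ) + (a 4 : ℚ) / 2) : ℚ × ℚ × ℚ × ℚ))
      {a | a 1 ≤ 1 ∧ a 4 ≤ 1} Mset := by
  refine ⟨fun a _ => ?_, fun a ha b hb hab => ?_, fun u hu => ?_⟩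
  · exact (mem_Mset_iff _).2 ⟨halfPair_mem_halfIntPairs _ _ _, halfPair_mem_halfIntPairs _ _ _⟩
  · simp only [Prod.mk.injEq] at hab
    obtain ⟨h₀, h₁, h₂⟩ := halfPair_inj ha.1 hb.1 (Prod.ext hab.1 hab.2.1)
    obtain ⟨h₃, h₄, h₅⟩ := halfPair_inj ha.2 hb.2 (Prod.ext hab.2.2.1 hab.2.2.2)
    funext i
    fin_cases i <;> assumption
  · obtain ⟨hu₁, hu₂⟩ := (mem_Mset_iff u).1 hu
    obtain ⟨a₀, a₁, a₂, h₁, hA⟩ := exists_halfPair_eq hu₁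
    obtain ⟨a₃, a₄, a₅, h₄, hB⟩ := exists_halfPair_eq hu₂
    refine ⟨![a₀, a₁, a₂, a₃, a₄, a₅], ⟨h₁, h₄⟩, ?_⟩
    simp only [halfPair, Prod.mk.injEq] at hA hB
    simp [hA, hB]
end
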